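/- With data (z_i, H(z_i)) for i = 1,…,M and p, q : ℂ → ℂ^k, define Whitfield's step-p error E_WF(w) = ∑_{i=1}^{M} (1/|d(z_i; w')|²) |n(z_i; w) − r(z_i; w') d(z_i; w) + n(z_i; w') − d(z_i; w') H(z_i)|², where w' = w⁽ᵖ⁻¹⁾ is the previous iterate, n(z;w) = wᵀp(z), d(z;w) = wᵀq(z), r = n/d. If the iteration has converged (w' = w) and d(z_i; w) ≠ 0 for all i, then the Wirtinger derivative of E_WF at w equals ∑_{i=1}^{M} (1/d(z_i; w)) (p(z_i) − r(z_i; w) q(z_i)) · conj(r(z_i; w) − H(z_i)). -/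

import Mathlib

/-!
With the previous iterate frozen, each summand of Whitfield's error is `c_i |A_i v + b_i|²`
with `A_i = pᵀ(z_i) - r_i qᵀ(z_i)` complex-linear in `v`. The real derivative of `|A v + b|²`
is `u ↦ 2 Re (conj (A w + b) · A u)`, and the Wirtinger derivative of `u ↦ Re (T u)` for a
complex-linear `T` is `T e_j / 2`; hence the Wirtinger gradient is `∑ c_i conj (A_i w + b_i) A_i e_j`.
At convergence the residual `A_i w + b_i` collapses to `d_i (r_i - H_i)`, and
`conj d_i / |d_i|² = 1 / d_i`.
-/

open scoped ComplexConjugate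

/-- The (unconjugated) dot product on `ℂ^k`. -/
noncomputable def dotc {k : ℕ} (w v : Fin k → ℂ) : ℂ := ∑ j, w j * v j

/-- Wirtinger derivative `df/dw_j = (1/2)(∂f/∂x_j − i ∂f/∂y_j)` of a
real-valued function of `w ∈ ℂ^k`. -/
noncomputable def wirt {k : ℕ} (f : (Fin k → ℂ) → ℝ) (w : Fin k → ℂ)
    (j : Fin k) : ℂ :=
  (1 / 2 : ℂ) * (((fderiv ℝ f w (Pi.single j 1) : ℝ) : ℂ)
    - Complex.I * ((fderiv ℝ f w (Pi.single j Complex.I) : ℝ) : ℂ))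

open ContinuousLinearMap

noncomputable def dotcCLM {k : ℕ} (x : Fin k → ℂ) : (Fin k → ℂ) →L[ℂ] ℂ :=
  ∑ j, x j • proj j

@[simp]
lemma dotcCLM_apply {k : ℕ} (x v : Fin k → ℂ) : dotcCLM x v = dotc v x := by
  simp [dotcCLM, dotc, mul_comm]

lemma dotc_single_one {k : ℕ} (x : Fin k → ℂ) (j : Fin k) :
    dotc (Pi.single j 1) x = x j := by
  simp [dotc, Pi.single_apply]

lemma dotc_sub_mul_dotc_add_sub {k : ℕ} (x y v : Fin k → ℂ) (r b c : ℂ) :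
    dotc v x - r * dotc v y + b - c = (dotcCLM x - r • dotcCLM y) v + (b - c) := by
  simp only [sub_apply, smul_apply, dotcCLM_apply, smul_eq_mul]
  ring

lemma ofReal_one_div_norm_sq_mul_conj (d : ℂ) : ((1 / ‖d‖ ^ 2 : ℝ) : ℂ) * conj d = 1 / d := by
  rw [one_div, one_div, Complex.inv_def, ← Complex.normSq_eq_norm_sq, mul_comm]

lemma wirt_eq_of_hasFDerivAt {k : ℕ} {f : (Fin k → ℂ) → ℝ} {f' : (Fin k → ℂ) →L[ℝ] ℝ}
    {w : Fin k → ℂ} (hf : HasFDerivAt f f' w) (T : (Fin k → ℂ) →L[ℂ] ℂ)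
    (hT : ∀ u, f' u = (T u).re) (j : Fin k) :
    wirt f w j = T (Pi.single j 1) / 2 := by
  have hI : (Pi.single j Complex.I : Fin k → ℂ) = Complex.I • Pi.single j 1 := by
    rw [← Pi.single_smul', smul_eq_mul, mul_one]
  rw [wirt, hf.fderiv, hT, hT, hI, map_smul, smul_eq_mul, Complex.I_mul_re, Complex.ofReal_neg]
  nth_rw 3 [← Complex.re_add_im (T (Pi.single j 1))]
  ring

lemma hasFDerivAt_norm_sq_add_const {E : Type*} [NormedAddCommGroup E] [NormedSpace ℂ E]
    (A : E →L[ℂ] ℂ) (b : ℂ) (w : E) :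
    HasFDerivAt (fun v => ‖A v + b‖ ^ 2)
      (Complex.reCLM.comp (((2 * conj (A w + b)) • A).restrictScalars ℝ)) w := by
  refine ((A.restrictScalars ℝ).hasFDerivAt.add_const b).norm_sq.congr_fderiv ?_
  ext u
  simp [Complex.inner]
  ring

lemma wirt_weighted_sum_norm_sq {k M : ℕ} (c : Fin M → ℝ) (A : Fin M → (Fin k → ℂ) →L[ℂ] ℂ)
    (b : Fin M → ℂ) (w : Fin k → ℂ) (j : Fin k) :
    wirt (fun v => ∑ i, c i * ‖A i v + b i‖ ^ 2) w j
      = ∑ i, c i * conj (A i w + b i) * A i (Pi.single j 1) := by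
  have hf := HasFDerivAt.fun_sum (u := Finset.univ) fun i _ =>
    (hasFDerivAt_norm_sq_add_const (A i) (b i) w).const_mul (c i)
  rw [wirt_eq_of_hasFDerivAt hf (∑ i, (2 * c i * conj (A i w + b i)) • A i)]
  · simp only [sum_apply, smul_apply, smul_eq_mul, Finset.sum_div]
    refine Finset.sum_congr rfl fun i _ => ?_
    ring
  · intro u
    simp only [sum_apply, smul_apply, comp_apply, coe_restrictScalars', Complex.reCLM_apply,
      smul_eq_mul, Complex.re_sum]
    refine Finset.sum_congr rfl fun i _ => ?_
    rw [← Complex.re_ofReal_mul]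
    ring_nf

/-- Wirtinger derivative of Whitfield's error at a fixed point of
the iteration (the previous iterate `w'` is frozen and set equal to `w`). -/
theorem wirtinger_gradient_wf_converged {k M : ℕ} (z H : Fin M → ℂ)
    (p q : ℂ → Fin k → ℂ) (w : Fin k → ℂ)
    (hd : ∀ i, dotc w (q (z i)) ≠ 0) (j : Fin k) :
    wirt (fun v => ∑ i, (1 / ‖dotc w (q (z i))‖ ^ 2)
        * ‖dotc v (p (z i))
            - (dotc w (p (z i)) / dotc w (q (z i))) * dotc v (q (z i))
            + dotc w (p (z i)) - dotc w (q (z i)) * H i‖ ^ 2) w j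
      = ∑ i, (1 / dotc w (q (z i)))
          * (p (z i) j - (dotc w (p (z i)) / dotc w (q (z i))) * q (z i) j)
          * conj (dotc w (p (z i)) / dotc w (q (z i)) - H i) := by
  simp only [dotc_sub_mul_dotc_add_sub, wirt_weighted_sum_norm_sq]
  refine Finset.sum_congr rfl fun i _ => ?_
  set n := dotc w (p (z i))
  set d := dotc w (q (z i))
  have hres : (dotcCLM (p (z i)) - (n / d) • dotcCLM (q (z i))) w + (n - d * H i)
      = d * (n / d - H i) := by
    simp only [sub_apply, smul_apply, dotcCLM_apply, smul_eq_mul]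
    change n - n / d * d + (n - d * H i) = d * (n / d - H i)
    rw [div_mul_cancel₀ n (hd i), sub_self, zero_add, mul_sub, mul_div_cancel₀ n (hd i)]
  have hdir : (dotcCLM (p (z i)) - (n / d) • dotcCLM (q (z i))) (Pi.single j 1)
      = p (z i) j - n / d * q (z i) j := by
    simp [dotc_single_one]
  rw [hres, hdir, map_mul, ← mul_assoc, ofReal_one_div_norm_sq_mul_conj]
  ring
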